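/- arXiv:2308.16457 — 2 statements merged into one kernel-verified Lean document; each statement's English description precedes it below -/
import Mathlib

section
/- Let n ≥ 2 and π ∈ ℒⁿ. Then the convex hull of 𝒮^π = {s⁰(π), s¹(π), …, s^{n−1}(π)} ⊂ ℝⁿ is an (n−1)-dimensional simplex in ℝⁿ, i.e., it is the convex hull of n affinely independent points and has dimension n−1. -/
open scoped Pointwise

/-- One pass of the stack-sorting algorithm: `ssAux stack input`, where
`stack` holds the current stack contents, top first.  If the next input
entry exceeds the top of the stack, the top is popped to the output;
otherwise the entry is pushed; at the end the stack is popped entirely. -/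
def ssAux : List ℕ → List ℕ → List ℕ
  | stack, [] => stack
  | [], x :: xs => ssAux [x] xs
  | t :: ts, x :: xs =>
    if t < x then t :: ssAux ts (x :: xs) else ssAux (x :: t :: ts) xs
termination_by stack inp => stack.length + 2 * inp.length

/-- The stack-sorting map `s`: one pass of the stack-sorting algorithm. -/
def stackSort (l : List ℕ) : List ℕ := ssAux [] l

/-- A list of naturals, viewed as a point of `ℝⁿ`. -/
def toPoint (n : ℕ) (l : List ℕ) : Fin n → ℝ := fun i => (l.getD i 0 : ℝ)

lemma ssAux_perm (st l : List ℕ) : (ssAux st l).Perm (st ++ l) := by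
  induction st, l using ssAux.induct with
  | case1 st => simp [ssAux]
  | case2 x xs ih => simpa [ssAux] using ih
  | case3 t ts x xs h ih =>
      rw [ssAux]; simp only [if_pos h]
      exact (ih.cons t)
  | case4 t ts x xs h ih =>
      rw [ssAux]; simp only [if_neg h]
      refine ih.trans ?_
      exact (List.perm_middle (a:=x) (l₁:=t::ts) (l₂:=xs)).symm

lemma ssAux_bottom (m : ℕ) (st B : List ℕ) (hB : ∀ b ∈ B, b < m) :
    ssAux (st ++ [m]) B = ssAux st B ++ [m] := by
  induction st, B using ssAux.induct with
  | case1 st => simp [ssAux]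
  | case2 x xs ih =>
      have hx : x < m := hB x (by simp)
      simp only [List.nil_append]
      rw [ssAux, ssAux]
      simp only [if_neg (by omega : ¬ m < x)]
      exact ih (fun b hb => hB b (by simp [hb]))
  | case3 t ts x xs h ih =>
      rw [show (t :: ts) ++ [m] = t :: (ts ++ [m]) by simp, ssAux, ssAux]
      simp only [if_pos h]
      rw [ih hB]; simp
  | case4 t ts x xs h ih =>
      rw [show (t :: ts) ++ [m] = t :: (ts ++ [m]) by simp, ssAux, ssAux]
      simp only [if_neg h]
      exact ih (fun b hb => hB b (by simp [hb]))

lemma ssAux_pop_all (m : ℕ) (B : List ℕ) (st : List ℕ) (hst : ∀ a ∈ st, a < m) :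
    ssAux st (m :: B) = st ++ ssAux [m] B := by
  induction st with
  | nil => simp [ssAux]
  | cons t ts ih =>
      rw [ssAux]
      simp only [if_pos (hst t (by simp))]
      rw [ih (fun a ha => hst a (by simp [ha]))]
      simp

lemma ssAux_split (m : ℕ) (B : List ℕ) (hB : ∀ b ∈ B, b < m) (st A : List ℕ)
    (hst : ∀ a ∈ st, a < m) (hA : ∀ a ∈ A, a < m) :
    ssAux st (A ++ m :: B) = ssAux st A ++ ssAux [] B ++ [m] := by
  induction st, A using ssAux.induct with
  | case1 st =>
      simp only [List.nil_append, ssAux]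
      rw [ssAux_pop_all m B st hst]
      have := ssAux_bottom m [] B hB
      simp only [List.nil_append] at this
      rw [this, List.append_assoc]
  | case2 x xs ih =>
      have hx : x < m := hA x (by simp)
      simp only [List.cons_append]
      rw [ssAux, ssAux]
      exact ih (by intro a ha; simp at ha; omega)
        (fun a ha => hA a (by simp [ha]))
  | case3 t ts x xs h ih =>
      simp only [List.cons_append]
      rw [ssAux, ssAux]
      simp only [if_pos h]
      have ih' := ih (fun a ha => hst a (by simp [ha])) hA
      simp only [List.cons_append] at ih'
      rw [ih']
      simp
  | case4 t ts x xs h ih =>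
      simp only [List.cons_append]
      rw [ssAux, ssAux]
      simp only [if_neg h]
      refine ih ?_ (fun a ha => hA a (by simp [ha]))
      intro a ha
      simp only [List.mem_cons] at ha
      rcases ha with h1 | h1 | h1
      · exact h1 ▸ hA x (by simp)
      · exact h1 ▸ hst t (by simp)
      · exact hst a (by simp [h1])

lemma stackSort_perm (l : List ℕ) : (stackSort l).Perm l := by
  simpa [stackSort] using ssAux_perm [] l

lemma stackSort_split (m : ℕ) (A B : List ℕ) (hA : ∀ a ∈ A, a < m)
    (hB : ∀ b ∈ B, b < m) :
    stackSort (A ++ m :: B) = stackSort A ++ stackSort B ++ [m] :=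
  ssAux_split m B hB [] A (by simp) hA

lemma stackSort_nil : stackSort [] = [] := by rw [stackSort, ssAux]

lemma stackSort_tail (k s : ℕ) (X : List ℕ) (hX : ∀ a ∈ X, a < s) :
    stackSort (X ++ List.range' s k) = stackSort X ++ List.range' s k := by
  induction k with
  | zero => simp
  | succ k ih =>
      have hr : List.range' s (k + 1) = List.range' s k ++ [s + k] := by
        simpa using (List.range'_concat (step := 1) : List.range' s (k + 1) = _)
      rw [hr, ← List.append_assoc]
      have h1 : ∀ a ∈ X ++ List.range' s k, a < s + k := by
        intro a ha
        rcases List.mem_append.mp ha with h | h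
        · have := hX a h; omega
        · rw [List.mem_range'_1] at h; omega
      have := stackSort_split (s + k) (X ++ List.range' s k) [] h1 (by simp)
      rw [this, stackSort_nil, ih, List.append_assoc]
      simp

lemma stackSort_singleton (a : ℕ) : stackSort [a] = [a] := by
  rw [stackSort, ssAux, ssAux]

lemma key (n : ℕ) (hn : 2 ≤ n) (L : List ℕ) (hL : L.Perm (List.range' 2 (n - 2))) :
    ∀ i, 1 ≤ i → i ≤ n - 1 →
    ∃ R : List ℕ, R.Perm (List.range' 2 (n - 1 - i)) ∧
      stackSort^[i] (L ++ [n, 1]) =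
        stackSort R ++ 1 :: List.range' (n - i + 1) i := by
  intro i
  induction i with
  | zero => omega
  | succ i ih =>
      intro _ hi1
      rcases Nat.eq_zero_or_pos i with rfl | hipos
      · -- base case i+1 = 1
        refine ⟨L, by rw [show n - 1 - (0+1) = n - 2 by omega]; exact hL, ?_⟩
        have hA : ∀ a ∈ L, a < n := by
          intro a ha
          have := hL.mem_iff.mp ha
          rw [List.mem_range'_1] at this
          omega
        have hB : ∀ b ∈ [1], b < n := by intro b hb; simp at hb; omega
        have h := stackSort_split n L [1] hA hB
        simp only [zero_add, Function.iterate_one]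
        rw [show L ++ [n, 1] = L ++ n :: [1] by simp, h, stackSort_singleton]
        have h2 : List.range' (n - 1 + 1) 1 = [n] := by
          rw [List.range'_one, show n - 1 + 1 = n by omega]
        rw [h2]
        simp
      · -- inductive step
        obtain ⟨R, hR, hform⟩ := ih hipos (by omega)
        set c : ℕ := n - 1 - i with hc
        have hc1 : 1 ≤ c := by omega
        have hmem : c + 1 ∈ R := by
          rw [hR.mem_iff, List.mem_range'_1]; omega
        obtain ⟨A, B, rfl⟩ := List.append_of_mem hmem
        have hABperm : (A ++ B).Perm (List.range' 2 (c - 1)) := by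
          have h1 : ((c+1) :: (A ++ B)).Perm ((c+1) :: List.range' 2 (c - 1)) := by
            refine (List.perm_middle.symm.trans hR).trans ?_
            have : List.range' 2 c = List.range' 2 (c-1) ++ [c+1] := by
              have := (List.range'_concat (step := 1) : List.range' 2 (c - 1 + 1) = _)
              rw [show c - 1 + 1 = c by omega] at this
              rw [this]
              congr 1
              simp
              omega
            rw [this]
            exact List.perm_append_singleton _ _ |>.symm.trans (List.Perm.refl _) |>.symm
          exact (List.perm_cons _).mp h1
        have hAB_lt : ∀ a ∈ A ++ B, a < c + 1 := by
          intro a ha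
          have := hABperm.mem_iff.mp ha
          rw [List.mem_range'_1] at this
          omega
        have hA_lt : ∀ a ∈ A, a < c + 1 := fun a ha => hAB_lt a (by simp [ha])
        have hB_lt : ∀ a ∈ B, a < c + 1 := fun a ha => hAB_lt a (by simp [ha])
        have hsplitR : stackSort (A ++ (c+1) :: B) =
            stackSort A ++ stackSort B ++ [c+1] :=
          stackSort_split (c+1) A B hA_lt hB_lt
        refine ⟨stackSort A ++ stackSort B, ?_, ?_⟩
        · refine ((stackSort_perm A).append (stackSort_perm B)).trans ?_
          rw [show n - 1 - (i+1) = c - 1 by omega]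
          exact hABperm
        · rw [Function.iterate_succ_apply', hform, hsplitR]
          have hX : ∀ a ∈ ((stackSort A ++ stackSort B) ++ [c+1]) ++ [1],
              a < c + 2 := by
            intro a ha
            simp only [List.mem_append, List.mem_singleton] at ha
            rcases ha with (⟨h1 | h1⟩ | h1) | h1
            · have := ((stackSort_perm A).mem_iff.mp h1); have := hA_lt a this; omega
            · have := ((stackSort_perm B).mem_iff.mp h1); have := hB_lt a this; omega
            · omega
            · omega
          have harr : stackSort A ++ stackSort B ++ [c+1] ++ 1 :: List.range' (n - i + 1) i
              = (((stackSort A ++ stackSort B) ++ [c+1]) ++ [1]) ++ List.range' (c+2) i := by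
            rw [show n - i + 1 = c + 2 by omega]
            simp
          rw [harr, stackSort_tail i (c+2) _ hX]
          have harr2 : ((stackSort A ++ stackSort B) ++ [c+1]) ++ [1]
              = (stackSort A ++ stackSort B) ++ (c+1) :: [1] := by simp
          have hXY : ∀ a ∈ stackSort A ++ stackSort B, a < c + 1 := by
            intro a ha
            rcases List.mem_append.mp ha with h1 | h1
            · exact hA_lt a ((stackSort_perm A).mem_iff.mp h1)
            · exact hB_lt a ((stackSort_perm B).mem_iff.mp h1)
          rw [harr2, stackSort_split (c+1) _ [1] hXY (by intro b hb; simp at hb; omega),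
            stackSort_singleton]
          rw [show n - (i+1) + 1 = c + 1 by omega]
          rw [List.range'_succ]
          simp [show c + 1 + 1 = c + 2 by omega]

lemma length_form (R : List ℕ) (m : ℕ) (hR : R.Perm (List.range' 2 m)) :
    (stackSort R).length = m := by
  rw [(stackSort_perm R).length_eq, hR.length_eq, List.length_range']

lemma factA (n : ℕ) (hn : 2 ≤ n) (L : List ℕ)
    (hL : L.Perm (List.range' 2 (n - 2))) :
    ∀ k ≤ n - 1, (stackSort^[k] (L ++ [n, 1])).getD (n - 1 - k) 0 = 1 := by
  intro k hk
  rcases Nat.eq_zero_or_pos k with rfl | hk1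
  · simp only [Function.iterate_zero, id_eq, Nat.sub_zero]
    have hlen : L.length = n - 2 := by rw [hL.length_eq, List.length_range']
    rw [List.getD_append_right _ _ _ _ (by omega), hlen,
      show n - 1 - (n - 2) = 1 by omega]
    rfl
  · obtain ⟨R, hR, hform⟩ := key n hn L hL k hk1 hk
    rw [hform]
    have hlen := length_form R _ hR
    rw [List.getD_append_right _ _ _ _ (by omega), hlen, Nat.sub_self]
    rfl

lemma factB (n : ℕ) (hn : 2 ≤ n) (L : List ℕ)
    (hL : L.Perm (List.range' 2 (n - 2))) :
    ∀ i k, i < k → k ≤ n - 1 →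
      (stackSort^[k] (L ++ [n, 1])).getD (n - 1 - i) 0 = n - i := by
  intro i k hik hk
  obtain ⟨R, hR, hform⟩ := key n hn L hL k (by omega) hk
  rw [hform]
  have hlen := length_form R _ hR
  rw [List.getD_append_right _ _ _ _ (by omega), hlen,
    show n - 1 - i - (n - 1 - k) = (k - i - 1) + 1 by omega,
    List.getD_cons_succ]
  have hlt : k - i - 1 < (List.range' (n - k + 1) k).length := by
    rw [List.length_range']; omega
  rw [List.getD_eq_getElem _ _ hlt, List.getElem_range']
  omega

/-- Let `n ≥ 2` and `π = L ++ [n, 1] ∈ ℒⁿ`, where `L` is a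
permutation of `{2, …, n-1}`.  Then the convex hull of
`𝒮^π = {s⁰(π), …, s^{n-1}(π)} ⊆ ℝⁿ` is an `(n-1)`-dimensional simplex: it is
the convex hull of `n` affinely independent points and its affine hull has
dimension `n - 1`. -/
theorem convexHull_ssIterates_is_simplex (n : ℕ) (hn : 2 ≤ n) (L : List ℕ)
    (hL : L.Perm (List.range' 2 (n - 2))) :
    AffineIndependent ℝ
      (fun i : Fin n => toPoint n (stackSort^[(i : ℕ)] (L ++ [n, 1]))) ∧
    Module.finrank ℝ
      (affineSpan ℝ (convexHull ℝ
        (Set.range fun i : Fin n =>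
          toPoint n (stackSort^[(i : ℕ)] (L ++ [n, 1]))))).direction = n - 1 := by
  set p : Fin n → (Fin n → ℝ) :=
    fun i : Fin n => toPoint n (stackSort^[(i : ℕ)] (L ++ [n, 1])) with hp
  have hindep : AffineIndependent ℝ p := by
    rw [affineIndependent_iff_of_fintype]
    intro w hw hvsub
    rw [Finset.weightedVSub_eq_linear_combination _ hw] at hvsub
    have main : ∀ m : ℕ, ∀ hm : m < n, w ⟨m, hm⟩ = 0 := by
      intro m
      induction m using Nat.strong_induction_on with
      | _ m IH =>
        intro hm
        rcases lt_or_ge m (n - 1) with hcase | hcase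
        · have hj : n - 1 - m < n := by omega
          have hcoord := congrFun hvsub ⟨n - 1 - m, hj⟩
          simp only [Finset.sum_apply, Pi.smul_apply, smul_eq_mul,
            Pi.zero_apply] at hcoord
          set d : ℝ := ((n - m : ℕ) : ℝ) with hd
          have hd2 : (2 : ℝ) ≤ d := by
            rw [hd]; exact_mod_cast (by omega : 2 ≤ n - m)
          have hptwise : ∀ k : Fin n, w k * p k ⟨n - 1 - m, hj⟩
              = w k * d + (if k = ⟨m, hm⟩ then w k * (1 - d) else 0) := by
            intro k
            rcases lt_trichotomy (k : ℕ) m with h1 | h1 | h1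
            · have hw0 : w k = 0 := by
                have := IH (k : ℕ) h1 k.isLt
                simpa using this
              rw [hw0, if_neg (fun h => by
                have := congrArg Fin.val h; simp at this; omega)]
              ring
            · have hk : k = ⟨m, hm⟩ := Fin.ext h1
              have hp1 : p k ⟨n - 1 - m, hj⟩ = 1 := by
                rw [hp, hk]
                show ((stackSort^[m] (L ++ [n, 1])).getD (n - 1 - m) 0 : ℝ) = 1
                rw [factA n hn L hL m (by omega)]
                norm_num
              rw [hp1, if_pos hk]
              ring
            · have hpk : p k ⟨n - 1 - m, hj⟩ = d := by
                rw [hp]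
                show ((stackSort^[(k : ℕ)] (L ++ [n, 1])).getD (n - 1 - m) 0 : ℝ) = d
                rw [factB n hn L hL m k h1 (by omega : (k : ℕ) ≤ n - 1), hd]
              rw [hpk, if_neg (fun h => by
                have := congrArg Fin.val h; simp at this; omega)]
              ring
          rw [Finset.sum_congr rfl (fun k _ => hptwise k),
            Finset.sum_add_distrib, ← Finset.sum_mul, hw,
            Finset.sum_ite_eq' Finset.univ (⟨m, hm⟩ : Fin n)
              (fun k => w k * (1 - d))] at hcoord
          simp only [Finset.mem_univ, if_true, zero_mul, zero_add] at hcoord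
          have h1d : (1 : ℝ) - d ≠ 0 := by linarith
          exact (mul_eq_zero.mp hcoord).resolve_right h1d
        · have hm1 : m = n - 1 := by omega
          have := Finset.sum_eq_single_of_mem (⟨m, hm⟩ : Fin n)
            (Finset.mem_univ _) (f := w)
            (fun b _ hb => by
              have hbv : (b : ℕ) < m := by
                have : (b : ℕ) ≠ m := fun h => hb (Fin.ext h)
                have := b.isLt
                omega
              have := IH (b : ℕ) hbv b.isLt
              simpa using this)
          rw [hw] at this
          exact this.symm
    intro i
    have := main (i : ℕ) i.isLt
    simpa using this
  refine ⟨hindep, ?_⟩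
  rw [affineSpan_convexHull, direction_affineSpan]
  exact hindep.finrank_vectorSpan (by rw [Fintype.card_fin]; omega)
end

section
/- Let n ≥ 2, let τₙ = 2 3 ⋯ (n−1) n 1 and τ_{n+1} = 2 3 ⋯ n (n+1) 1, and let △ₙ ⊂ ℝⁿ and △_{n+1} ⊂ ℝ^{n+1} be the convex hulls of the stack-sorting iterates of τₙ and τ_{n+1} respectively. Then for every real λ ≥ 0, |λ(△_{n+1} − τ_{n+1}) ∩ ℤ^{n+1}| = Σ_{k=0}^{⌊nλ⌋} |(k/n)(△ₙ − τₙ) ∩ ℤⁿ|. -/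
open scoped Pointwise

/-- The permutation `τₙ = 2 3 ⋯ (n-1) n 1`, as a list. -/
def tauList (n : ℕ) : List ℕ := List.range' 2 (n - 1) ++ [1]

/-- The point of `ℝⁿ` corresponding to `τₙ = 2 3 ⋯ (n-1) n 1`. -/
noncomputable def tauPt (n : ℕ) : Fin n → ℝ := toPoint n (tauList n)

/-- The set `𝒮^{τₙ} = {s⁰(τₙ), s¹(τₙ), …, s^{n-1}(τₙ)} ⊆ ℝⁿ` of
stack-sorting iterates of `τₙ`, regarded as points of `ℝⁿ`. -/
noncomputable def ssIterates (n : ℕ) : Set (Fin n → ℝ) :=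
  Set.range fun i : Fin n => toPoint n (stackSort^[(i : ℕ)] (tauList n))

/-- The simplex `△ₙ`: the convex hull of the stack-sorting iterates of
`τₙ = 2 3 ⋯ (n-1) n 1`. -/
noncomputable def ssSimplex (n : ℕ) : Set (Fin n → ℝ) :=
  convexHull ℝ (ssIterates n)

/-- `x ∈ ℝⁿ` is a lattice (integer) point if all its coordinates are integers. -/
def IsLatticePt {n : ℕ} (x : Fin n → ℝ) : Prop := ∀ i, ∃ z : ℤ, x i = (z : ℝ)

/-- The number of lattice points of a subset of `ℝⁿ`. -/
noncomputable def lattCount {n : ℕ} (S : Set (Fin n → ℝ)) : ℕ :=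
  Set.ncard {x ∈ S | IsLatticePt x}

lemma ssAux_nil (s : List ℕ) : ssAux s [] = s := by rw [ssAux]

lemma ssAux_nil_cons (x : ℕ) (xs : List ℕ) : ssAux [] (x :: xs) = ssAux [x] xs := by rw [ssAux]

lemma ssAux_cons_cons (t x : ℕ) (ts xs : List ℕ) :
    ssAux (t :: ts) (x :: xs) =
      if t < x then t :: ssAux ts (x :: xs) else ssAux (x :: t :: ts) xs := by rw [ssAux]

lemma ssAux_inc (a : ℕ) : ∀ (c : ℕ) (L : List ℕ),
    ssAux [c] (List.range' (c+1) a ++ L) = List.range' c a ++ ssAux [c + a] L := by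
  induction a with
  | zero => intro c L; simp [List.range']
  | succ a ih =>
    intro c L
    rw [List.range'_succ, List.cons_append, ssAux_cons_cons, if_pos (Nat.lt_succ_self c),
      ssAux_nil_cons, ih (c+1) L, List.range'_succ]
    simp [Nat.add_assoc, Nat.add_comm 1 a]

lemma stackSort_step (a b : ℕ) (ha : 1 ≤ a) :
    stackSort (List.range' 2 a ++ 1 :: List.range' (a+2) b) =
      List.range' 2 (a-1) ++ 1 :: List.range' (a+1) b ++ [a+1+b] := by
  obtain ⟨a', rfl⟩ : ∃ a', a = a' + 1 := ⟨a - 1, (Nat.succ_pred_eq_of_pos ha).symm⟩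
  rw [List.range'_succ, stackSort, List.cons_append, ssAux_nil_cons]
  rw [ssAux_inc a' 2 (1 :: List.range' (a'+1+2) b)]
  rw [ssAux_cons_cons, if_neg (by omega)]
  have hb : ∀ s, ssAux [1, s+1] (List.range' (s+2) b) = 1 :: List.range' (s+1) b ++ [s+1+b] := by
    intro s
    cases b with
    | zero => simp [List.range', ssAux_nil]
    | succ b' =>
      rw [List.range'_succ, ssAux_cons_cons, if_pos (by omega)]
      rw [ssAux_cons_cons, if_pos (by omega), ssAux_nil_cons]
      have h := ssAux_inc b' (s+2) ([] : List ℕ)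
      rw [List.append_nil, ssAux_nil] at h
      rw [show s+2+1 = s+2+1 from rfl, h, List.range'_succ]
      simp [List.range'_succ]
      omega
  have h2 : 2 + a' = a' + 1 + 1 := by omega
  have h2' : a' + 1 + 2 = (a' + 1) + 2 := rfl
  rw [h2]
  rw [hb (a'+1)]
  simp [Nat.add_sub_cancel]

/-- Explicit form of the iterates. -/

def ssList (n i : ℕ) : List ℕ := List.range' 2 (n-1-i) ++ 1 :: List.range' (n+1-i) i

lemma ssList_zero (n : ℕ) : ssList n 0 = tauList n := by
  simp [ssList, tauList]

lemma stackSort_iterate (n : ℕ) : ∀ i, i ≤ n - 1 →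
    stackSort^[i] (tauList n) = ssList n i := by
  intro i
  induction i with
  | zero => intro _; simp [ssList_zero]
  | succ i ih =>
    intro h
    rw [Function.iterate_succ_apply', ih (by omega), ssList]
    have ha : 1 ≤ n - 1 - i := by omega
    have h2 : n + 1 - i = (n - 1 - i) + 2 := by omega
    rw [h2, stackSort_step _ _ ha]
    have h3 : n - 1 - i - 1 = n - 1 - (i+1) := by omega
    have h4 : n - 1 - i + 1 = n + 1 - (i+1) := by omega
    rw [ssList, h3, h4,
      show n+1-(i+1)+i = n+1-(i+1) + 1*i by omega, List.append_assoc,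
      List.cons_append, ← List.range'_concat]

/-- Explicit coordinates of the iterates as points of ℝⁿ. -/

noncomputable def vert (n a : ℕ) : Fin n → ℝ := fun j =>
  if (j:ℕ) < n-1-a then (j:ℝ)+2 else if (j:ℕ) = n-1-a then 1 else (j:ℝ)+1

lemma toPoint_ssList (n a : ℕ) (ha : a ≤ n-1) (hn : 1 ≤ n) :
    toPoint n (ssList n a) = vert n a := by
  funext j
  have hj : (j:ℕ) < n := j.isLt
  have hlen : (List.range' 2 (n-1-a)).length = n-1-a := List.length_range'
  rw [toPoint, ssList, vert]
  by_cases h1 : (j:ℕ) < n-1-a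
  · rw [if_pos h1, List.getD_append _ _ _ _ (by omega)]
    rw [List.getD_eq_getElem _ _ (by omega), List.getElem_range']
    push_cast; ring
  · rw [if_neg h1, List.getD_append_right _ _ _ _ (by omega), hlen]
    by_cases h2 : (j:ℕ) = n-1-a
    · rw [if_pos h2, h2, Nat.sub_self]
      simp
    · rw [if_neg h2]
      have h3 : (j:ℕ) - (n-1-a) = ((j:ℕ) - (n-1-a) - 1) + 1 := by omega
      rw [h3]
      have h5 : (j:ℕ) - (n-1-a) - 1 < a := by omega
      show ((List.range' (n+1-a) a).getD ((j:ℕ) - (n-1-a) - 1) 0 : ℝ) = (j:ℝ)+1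
      rw [List.getD_eq_getElem _ _ (by simp [List.length_range']; omega), List.getElem_range']
      have : n+1-a + 1*((j:ℕ)-(n-1-a)-1) = (j:ℕ)+1 := by omega
      rw [this]; push_cast; ring

lemma tauPt_eq_vert (n : ℕ) (hn : 1 ≤ n) : tauPt n = vert n 0 := by
  rw [tauPt, ← ssList_zero, toPoint_ssList n 0 (by omega) hn]

lemma ssIterates_eq (n : ℕ) (hn : 1 ≤ n) :
    ssIterates n = Set.range fun i : Fin n => vert n i := by
  unfold ssIterates
  have he : (fun i : Fin n => toPoint n (stackSort^[(i:ℕ)] (tauList n)))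
      = fun i : Fin n => vert n (i:ℕ) := by
    funext i
    have hi := i.isLt
    rw [stackSort_iterate n (i:ℕ) (by omega), toPoint_ssList n (i:ℕ) (by omega) hn]
  rw [he]

section ConvexMachinery
variable {E : Type*} [AddCommGroup E] [Module ℝ E]

lemma convexHull_range_fin {m : ℕ} (f : Fin m → E) :
    convexHull ℝ (Set.range f) =
      {x | ∃ c : Fin m → ℝ, (∀ i, 0 ≤ c i) ∧ ∑ i, c i = 1 ∧ x = ∑ i, c i • f i} := by
  apply le_antisymm
  · apply convexHull_min
    · rintro x ⟨i₀, rfl⟩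
      refine ⟨fun i => if i = i₀ then 1 else 0, fun i => by positivity, ?_, ?_⟩
      · simp [Finset.sum_ite_eq']
      · simp [ite_smul, Finset.sum_ite_eq']
    · rintro x ⟨cx, hcx0, hcx1, rfl⟩ y ⟨cy, hcy0, hcy1, rfl⟩ a b ha hb hab
      refine ⟨fun i => a * cx i + b * cy i,
        fun i => by have := hcx0 i; have := hcy0 i; positivity, ?_, ?_⟩
      · rw [Finset.sum_add_distrib, ← Finset.mul_sum, ← Finset.mul_sum, hcx1, hcy1,
          mul_one, mul_one, hab]
      · rw [Finset.smul_sum, Finset.smul_sum, ← Finset.sum_add_distrib]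
        exact Finset.sum_congr rfl fun i _ => by
          rw [add_smul, mul_smul, mul_smul, smul_comm a (cx i), smul_comm b (cy i)]
  · rintro x ⟨c, hc0, hc1, rfl⟩
    exact Convex.sum_mem (convex_convexHull ℝ _) (fun i _ => hc0 i) hc1
      (fun i _ => subset_convexHull ℝ _ (Set.mem_range_self i))

lemma smul_convexHull_range_fin {m : ℕ} (hm : 0 < m) (f : Fin m → E) {lam : ℝ}
    (hlam : 0 ≤ lam) :
    lam • convexHull ℝ (Set.range f) =
      {x | ∃ c : Fin m → ℝ, (∀ i, 0 ≤ c i) ∧ ∑ i, c i = lam ∧ x = ∑ i, c i • f i} := by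
  ext x
  constructor
  · rintro ⟨y, hy, rfl⟩
    rw [convexHull_range_fin] at hy
    obtain ⟨c, hc0, hc1, rfl⟩ := hy
    refine ⟨fun i => lam * c i, fun i => mul_nonneg hlam (hc0 i), ?_, ?_⟩
    · rw [← Finset.mul_sum, hc1, mul_one]
    · show lam • (∑ i, c i • f i) = _
      rw [Finset.smul_sum]
      exact Finset.sum_congr rfl fun i _ => (mul_smul lam (c i) (f i)).symm
  · rintro ⟨c, hc0, hc1, rfl⟩
    rcases eq_or_lt_of_le hlam with h0 | hpos
    · have hc : ∀ i ∈ Finset.univ, c i = 0 :=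
        (Finset.sum_eq_zero_iff_of_nonneg (fun i _ => hc0 i)).mp (hc1.trans h0.symm)
      have hx : ∑ i, c i • f i = 0 := Finset.sum_eq_zero fun i hi => by
        rw [hc i hi, zero_smul]
      rw [hx]
      refine ⟨f ⟨0, hm⟩, subset_convexHull ℝ _ (Set.mem_range_self _), ?_⟩
      show lam • f ⟨0, hm⟩ = 0
      rw [← h0, zero_smul]
    · have hne : lam ≠ 0 := ne_of_gt hpos
      refine ⟨∑ i, (lam⁻¹ * c i) • f i, ?_, ?_⟩
      · rw [convexHull_range_fin]
        refine ⟨fun i => lam⁻¹ * c i, fun i => mul_nonneg (by positivity) (hc0 i), ?_, rfl⟩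
        rw [← Finset.mul_sum, hc1, inv_mul_cancel₀ hne]
      · show lam • (∑ i, (lam⁻¹ * c i) • f i) = _
        rw [Finset.smul_sum]
        exact Finset.sum_congr rfl fun i _ => by
          rw [← mul_smul, ← mul_assoc, mul_inv_cancel₀ hne, one_mul]

end ConvexMachinery

/-- The vertex displacement vectors of the simplex. -/

noncomputable def dvec (n a : ℕ) : Fin n → ℝ := vert n a - vert n 0

lemma sub_image_convexHull (v : Fin n → ℝ) (S : Set (Fin n → ℝ)) :
    (· - v) '' convexHull ℝ S = convexHull ℝ ((· - v) '' S) := by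
  have h : (· - v) = ⇑((AffineEquiv.constVAdd ℝ (Fin n → ℝ) (-v)).toAffineMap) := by
    funext x
    simp [AffineEquiv.constVAdd, sub_eq_neg_add]
    rfl
  rw [h, AffineMap.image_convexHull]

lemma mem_scaled (n : ℕ) (hn : 1 ≤ n) (lam : ℝ) (hlam : 0 ≤ lam) :
    lam • ((· - tauPt n) '' ssSimplex n) =
      {x | ∃ c : Fin n → ℝ, (∀ i, 0 ≤ c i) ∧ ∑ i, c i = lam ∧
        x = ∑ i, c i • dvec n (i:ℕ)} := by
  rw [ssSimplex, sub_image_convexHull, ssIterates_eq n hn, tauPt_eq_vert n hn,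
    ← Set.range_comp]
  have h : ((· - vert n 0) ∘ fun i : Fin n => vert n (i:ℕ)) = fun i : Fin n => dvec n (i:ℕ) := by
    funext i
    simp [dvec]
  rw [h, smul_convexHull_range_fin hn _ hlam]

lemma vert_nonneg (n a : ℕ) (j : Fin n) : 0 ≤ vert n a j := by
  unfold vert
  split_ifs <;> positivity

lemma vert_le (n a : ℕ) (j : Fin n) : vert n a j ≤ (n:ℝ) + 1 := by
  have hj := j.isLt
  unfold vert
  split_ifs with h1 h2
  · have : (j:ℕ) + 2 ≤ n + 1 := by omega
    calc ((j:ℕ):ℝ) + 2 = (((j:ℕ) + 2 : ℕ) : ℝ) := by push_cast; ring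
    _ ≤ ((n + 1 : ℕ) : ℝ) := by exact_mod_cast this
    _ = (n:ℝ) + 1 := by push_cast; ring
  · have : (0:ℝ) ≤ n := by positivity
    linarith
  · have : (j:ℕ) + 1 ≤ n + 1 := by omega
    calc ((j:ℕ):ℝ) + 1 = (((j:ℕ) + 1 : ℕ) : ℝ) := by push_cast; ring
    _ ≤ ((n + 1 : ℕ) : ℝ) := by exact_mod_cast this
    _ = (n:ℝ) + 1 := by push_cast; ring

lemma dvec_abs_le (n a : ℕ) (j : Fin n) : |dvec n a j| ≤ 2 * (n:ℝ) + 2 := by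
  have h1 := vert_nonneg n a j
  have h2 := vert_le n a j
  have h3 := vert_nonneg n 0 j
  have h4 := vert_le n 0 j
  have : dvec n a j = vert n a j - vert n 0 j := rfl
  rw [this, abs_le]
  constructor <;> linarith

lemma latt_finite {m : ℕ} {S : Set (Fin m → ℝ)} {R : ℝ}
    (h : ∀ x ∈ S, ∀ j, |x j| ≤ R) : {x ∈ S | IsLatticePt x}.Finite := by
  classical
  have hsub : {x ∈ S | IsLatticePt x} ⊆
      (fun z : Fin m → ℤ => fun j => (z j : ℝ)) ''
        (Set.univ.pi fun _ : Fin m => (Set.Icc (⌈-R⌉) ⌊R⌋ : Set ℤ)) := by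
    rintro x ⟨hxS, hlat⟩
    choose z hz using hlat
    refine ⟨z, ?_, by funext j; exact (hz j).symm⟩
    intro j _
    have hb := h x hxS j
    rw [hz j, abs_le] at hb
    exact ⟨Int.ceil_le.mpr (by linarith [hb.1]), Int.le_floor.mpr hb.2⟩
  exact ((Set.Finite.pi fun _ => Set.finite_Icc _ _).image _).subset hsub

/-- The set of `lam`-scaled convex combinations of the displacement vectors. -/

noncomputable def MsetD (m : ℕ) (lam : ℝ) : Set (Fin m → ℝ) :=
  {x | ∃ c : Fin m → ℝ, (∀ i, 0 ≤ c i) ∧ ∑ i, c i = lam ∧ x = ∑ i, c i • dvec m (i:ℕ)}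

lemma mem_scaled' (n : ℕ) (hn : 1 ≤ n) (lam : ℝ) (hlam : 0 ≤ lam) :
    lam • ((· - tauPt n) '' ssSimplex n) = MsetD n lam :=
  mem_scaled n hn lam hlam

lemma MsetD_coord {m : ℕ} {x : Fin m → ℝ} {c : Fin m → ℝ}
    (hx : x = ∑ i, c i • dvec m (i:ℕ)) (j : Fin m) :
    x j = ∑ i, c i * dvec m (i:ℕ) j := by
  rw [hx]
  rw [Finset.sum_apply]
  exact Finset.sum_congr rfl fun i _ => rfl

lemma MsetD_bound (m : ℕ) (lam : ℝ) (x : Fin m → ℝ) (hx : x ∈ MsetD m lam) (j : Fin m) :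
    |x j| ≤ lam * (2 * (m:ℝ) + 2) := by
  obtain ⟨c, hc0, hc1, hxc⟩ := hx
  rw [MsetD_coord hxc j]
  have h1 : |∑ i, c i * dvec m (i:ℕ) j| ≤ ∑ i, |c i * dvec m (i:ℕ) j| :=
    Finset.abs_sum_le_sum_abs _ _
  have h2 : ∑ i, |c i * dvec m (i:ℕ) j| ≤ ∑ i, c i * (2 * (m:ℝ) + 2) :=
    Finset.sum_le_sum fun i _ => by
      rw [abs_mul, abs_of_nonneg (hc0 i)]
      exact mul_le_mul_of_nonneg_left (dvec_abs_le m _ j) (hc0 i)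
  have h3 : ∑ i, c i * (2 * (m:ℝ) + 2) = lam * (2 * (m:ℝ) + 2) := by
    rw [← Finset.sum_mul, hc1]
  linarith

lemma latt_MsetD_finite (m : ℕ) (lam : ℝ) : {x ∈ MsetD m lam | IsLatticePt x}.Finite :=
  latt_finite (MsetD_bound m lam)

/- Bridge lemmas between dimensions n and n+1. -/

lemma dvec_zero (n : ℕ) : dvec n 0 = 0 := by
  unfold dvec; rw [sub_self]

lemma vert_succ_castSucc (n a : ℕ) (j : Fin n) :
    vert (n+1) (a+1) j.castSucc = vert n a j := by
  unfold vert
  simp only [Fin.coe_castSucc]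
  rw [show n+1-1-(a+1) = n-1-a from by omega]

lemma vert_zero_castSucc (n : ℕ) (hn : 1 ≤ n) (j : Fin n) :
    vert (n+1) 0 j.castSucc = vert n 0 j + (if (j:ℕ) = n-1 then (n:ℝ) else 0) := by
  have hj := j.isLt
  unfold vert
  simp only [Fin.coe_castSucc, Nat.sub_zero]
  rw [if_pos (show (j:ℕ) < n+1-1 by omega)]
  by_cases h : (j:ℕ) = n-1
  · rw [if_neg (by omega), if_pos h, if_pos h]
    have : ((j:ℕ):ℝ) = (n:ℝ) - 1 := by
      have : (j:ℕ) + 1 = n := by omega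
      have := congrArg (fun t : ℕ => (t:ℝ)) this
      push_cast at this
      linarith
    rw [this]; ring
  · rw [if_pos (by omega), if_neg h]
    ring

lemma dvec_castSucc (n : ℕ) (hn : 1 ≤ n) (a : ℕ) (j : Fin n) :
    dvec (n+1) (a+1) j.castSucc = dvec n a j - (if (j:ℕ) = n-1 then (n:ℝ) else 0) := by
  show vert (n+1) (a+1) j.castSucc - vert (n+1) 0 j.castSucc = _
  rw [vert_succ_castSucc, vert_zero_castSucc n hn j]
  show _ = vert n a j - vert n 0 j - _
  ring

lemma dvec_last (n : ℕ) (hn : 1 ≤ n) (a : ℕ) :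
    dvec (n+1) (a+1) (Fin.last n) = (n:ℝ) := by
  show vert (n+1) (a+1) (Fin.last n) - vert (n+1) 0 (Fin.last n) = _
  unfold vert
  simp only [Fin.val_last]
  rw [if_neg (by omega), if_neg (by omega), if_neg (by omega), if_pos (by omega)]
  ring

/-- Slice of the lattice points of the big simplex at last coordinate `k`. -/

noncomputable def Ak (n : ℕ) (lam : ℝ) (k : ℕ) : Set (Fin (n+1) → ℝ) :=
  {x | x ∈ MsetD (n+1) lam ∧ IsLatticePt x ∧ x (Fin.last n) = (k:ℝ)}

/-- The slicing projection. -/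

noncomputable def Phi (n : ℕ) (x : Fin (n+1) → ℝ) : Fin n → ℝ :=
  fun j => x j.castSucc + (if (j:ℕ) = n-1 then x (Fin.last n) else 0)

lemma MsetD_last {n : ℕ} (hn : 1 ≤ n) {x : Fin (n+1) → ℝ} {c : Fin (n+1) → ℝ}
    (hx : x = ∑ i, c i • dvec (n+1) (i:ℕ)) :
    x (Fin.last n) = (n:ℝ) * ∑ i : Fin n, c i.succ := by
  rw [MsetD_coord hx, Fin.sum_univ_succ]
  have h0 : dvec (n+1) ((0 : Fin (n+1)):ℕ) (Fin.last n) = 0 := by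
    rw [show ((0 : Fin (n+1)):ℕ) = 0 from rfl, dvec_zero]; rfl
  rw [h0, mul_zero, zero_add, Finset.mul_sum]
  exact Finset.sum_congr rfl fun i _ => by
    rw [Fin.val_succ, dvec_last n hn (i:ℕ)]; ring

lemma sum_succ_coord (n : ℕ) (hn : 1 ≤ n) (c : Fin (n+1) → ℝ) (j : Fin n) :
    (∑ i : Fin (n+1), c i * dvec (n+1) (i:ℕ) (j.castSucc)) =
      (∑ i : Fin n, c i.succ * dvec n (i:ℕ) j)
        - (∑ i : Fin n, c i.succ) * (if (j:ℕ) = n-1 then (n:ℝ) else 0) := by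
  rw [Fin.sum_univ_succ]
  have h0 : dvec (n+1) ((0 : Fin (n+1)):ℕ) j.castSucc = 0 := by
    rw [show ((0 : Fin (n+1)):ℕ) = 0 from rfl, dvec_zero]; rfl
  rw [h0, mul_zero, zero_add, Finset.sum_mul, ← Finset.sum_sub_distrib]
  exact Finset.sum_congr rfl fun i _ => by
    rw [Fin.val_succ, dvec_castSucc n hn (i:ℕ) j]; ring

lemma phi_image (n : ℕ) (hn : 1 ≤ n) (lam : ℝ) (hlam : 0 ≤ lam) (k : ℕ)
    (hk : (k:ℝ) ≤ (n:ℝ) * lam) :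
    Phi n '' Ak n lam k = {y ∈ MsetD n ((k:ℝ)/n) | IsLatticePt y} := by
  have hn0 : (0:ℝ) < (n:ℝ) := by exact_mod_cast hn
  ext y
  constructor
  · rintro ⟨x, ⟨⟨c, hc0, hc1, hxc⟩, hlatt, hlast⟩, rfl⟩
    have hT : ∑ i : Fin n, c i.succ = (k:ℝ)/(n:ℝ) := by
      have := MsetD_last hn hxc
      rw [hlast] at this
      field_simp
      linarith [this]
    constructor
    · refine ⟨fun i => c i.succ, fun i => hc0 i.succ, hT, ?_⟩
      funext j
      rw [show (∑ i : Fin n, c i.succ • dvec n (i:ℕ)) j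
          = ∑ i : Fin n, c i.succ * dvec n (i:ℕ) j from MsetD_coord rfl j]
      show x j.castSucc + _ = _
      rw [MsetD_coord hxc j.castSucc, sum_succ_coord n hn c j, hT, hlast]
      by_cases hj : (j:ℕ) = n-1
      · rw [if_pos hj, if_pos hj]
        field_simp
        ring
      · rw [if_neg hj, if_neg hj]
        ring
    · intro j
      obtain ⟨z1, hz1⟩ := hlatt j.castSucc
      refine ⟨z1 + (if (j:ℕ) = n-1 then (k:ℤ) else 0), ?_⟩
      show x j.castSucc + _ = _
      rw [hz1, hlast]
      by_cases hj : (j:ℕ) = n-1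
      · rw [if_pos hj, if_pos hj]; push_cast; ring
      · rw [if_neg hj, if_neg hj]; push_cast; ring
  · rintro ⟨⟨s, hs0, hs1, hys⟩, hyl⟩
    set x : Fin (n+1) → ℝ :=
      fun jj => Fin.lastCases ((k:ℝ)) (fun j => y j - if (j:ℕ) = n-1 then (k:ℝ) else 0) jj
      with hxdef
    have hxlast : x (Fin.last n) = (k:ℝ) := by rw [hxdef]; simp
    have hxcs : ∀ j : Fin n, x j.castSucc = y j - (if (j:ℕ) = n-1 then (k:ℝ) else 0) := by
      intro j; rw [hxdef]; simp
    have hklam : (k:ℝ)/(n:ℝ) ≤ lam := by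
      rw [div_le_iff₀ hn0]; linarith [hk]
    set c : Fin (n+1) → ℝ := Fin.cases (lam - (k:ℝ)/(n:ℝ)) s with hcdef
    have hc0 : c 0 = lam - (k:ℝ)/(n:ℝ) := by rw [hcdef]; simp
    have hcs : ∀ i : Fin n, c i.succ = s i := by intro i; rw [hcdef]; simp
    have hcnn : ∀ i, 0 ≤ c i := by
      intro i
      induction i using Fin.cases with
      | zero => rw [hc0]; linarith
      | succ i => rw [hcs]; exact hs0 i
    have hcsum : ∑ i, c i = lam := by
      rw [Fin.sum_univ_succ, hc0]
      rw [Finset.sum_congr rfl fun i _ => hcs i, hs1]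
      ring
    have hxc : x = ∑ i, c i • dvec (n+1) (i:ℕ) := by
      funext jj
      rw [show (∑ i, c i • dvec (n+1) (i:ℕ)) jj
          = ∑ i, c i * dvec (n+1) (i:ℕ) jj from MsetD_coord rfl jj]
      induction jj using Fin.lastCases with
      | last =>
        rw [hxlast, Fin.sum_univ_succ,
          show ((0 : Fin (n+1)):ℕ) = 0 from rfl, dvec_zero]
        simp only [Pi.zero_apply, mul_zero, zero_add]
        rw [Finset.sum_congr rfl fun i _ => by
          rw [Fin.val_succ, dvec_last n hn (i:ℕ), hcs i]]
        rw [← Finset.sum_mul, hs1]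
        field_simp
      | cast j =>
        have hrw : (∑ i : Fin n, c i.succ * dvec n (i:ℕ) j)
            = ∑ i : Fin n, s i * dvec n (i:ℕ) j :=
          Finset.sum_congr rfl fun i _ => by rw [hcs i]
        have hrw2 : (∑ i : Fin n, c i.succ) = (k:ℝ)/(n:ℝ) := by
          rw [Finset.sum_congr rfl fun i _ => hcs i, hs1]
        rw [hxcs j, sum_succ_coord n hn c j, hrw, hrw2, ← MsetD_coord hys j]
        by_cases hj : (j:ℕ) = n-1
        · rw [if_pos hj, if_pos hj]; field_simp
        · rw [if_neg hj, if_neg hj]; ring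
    refine ⟨x, ⟨⟨c, hcnn, hcsum, hxc⟩, ?_, hxlast⟩, ?_⟩
    · intro jj
      induction jj using Fin.lastCases with
      | last => exact ⟨(k:ℤ), by rw [hxlast]; push_cast; ring⟩
      | cast j =>
        obtain ⟨z, hz⟩ := hyl j
        refine ⟨z - (if (j:ℕ) = n-1 then (k:ℤ) else 0), ?_⟩
        rw [hxcs j, hz]
        by_cases hj : (j:ℕ) = n-1
        · rw [if_pos hj, if_pos hj]; push_cast; ring
        · rw [if_neg hj, if_neg hj]; push_cast; ring
    · funext j
      show x j.castSucc + _ = y j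
      rw [hxcs j, hxlast]
      ring

lemma phi_injOn (n : ℕ) (lam : ℝ) (k : ℕ) : Set.InjOn (Phi n) (Ak n lam k) := by
  rintro x1 ⟨_, _, h1⟩ x2 ⟨_, _, h2⟩ heq
  funext jj
  induction jj using Fin.lastCases with
  | last => rw [h1, h2]
  | cast j =>
    have := congrFun heq j
    show x1 j.castSucc = x2 j.castSucc
    unfold Phi at this
    rw [h1, h2] at this
    by_cases hj : (j:ℕ) = n-1
    · rw [if_pos hj] at this; linarith
    · rw [if_neg hj] at this; linarith

lemma decomp (n : ℕ) (hn : 1 ≤ n) (lam : ℝ) (hlam : 0 ≤ lam) :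
    {x ∈ MsetD (n+1) lam | IsLatticePt x} =
      ⋃ k ∈ Finset.range ((⌊(n:ℝ) * lam⌋).toNat + 1), Ak n lam k := by
  have hn0 : (0:ℝ) < (n:ℝ) := by exact_mod_cast hn
  ext x
  simp only [Set.mem_setOf_eq, Set.mem_iUnion, Finset.mem_range, exists_prop]
  constructor
  · rintro ⟨hxM, hlatt⟩
    obtain ⟨c, hc0, hc1, hxc⟩ := hxM
    have hlastT := MsetD_last hn hxc
    have hTnn : 0 ≤ ∑ i : Fin n, c i.succ :=
      Finset.sum_nonneg fun i _ => hc0 i.succ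
    have hTle : ∑ i : Fin n, c i.succ ≤ lam := by
      rw [Fin.sum_univ_succ] at hc1
      have := hc0 0
      linarith
    obtain ⟨z, hz⟩ := hlatt (Fin.last n)
    have hznn : (0:ℝ) ≤ (z:ℝ) := by
      rw [← hz, hlastT]; positivity
    have hzint : 0 ≤ z := by exact_mod_cast hznn
    have hzle : (z:ℝ) ≤ (n:ℝ) * lam := by
      rw [← hz, hlastT]
      exact mul_le_mul_of_nonneg_left hTle (le_of_lt hn0)
    refine ⟨z.toNat, ?_, ⟨c, hc0, hc1, hxc⟩, hlatt, ?_⟩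
    · have h1 : z ≤ ⌊(n:ℝ) * lam⌋ := Int.le_floor.mpr hzle
      have := Int.toNat_le_toNat h1
      omega
    · rw [hz]
      congr 1
      exact (Int.toNat_of_nonneg hzint).symm
  · rintro ⟨k, _, hxM, hlatt, _⟩
    exact ⟨hxM, hlatt⟩

lemma Ak_finite (n : ℕ) (lam : ℝ) (k : ℕ) : (Ak n lam k).Finite := by
  apply (latt_MsetD_finite (n+1) lam).subset
  rintro x ⟨h1, h2, _⟩
  exact ⟨h1, h2⟩

lemma Ak_disjoint (n : ℕ) (lam : ℝ) {k l : ℕ} (hkl : k ≠ l) :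
    Disjoint (Ak n lam k) (Ak n lam l) := by
  rw [Set.disjoint_left]
  rintro x ⟨_, _, hxk⟩ ⟨_, _, hxl⟩
  rw [hxk] at hxl
  exact hkl (by exact_mod_cast hxl)

lemma ncard_biUnion_eq {α : Type*} (t : Finset ℕ) (A : ℕ → Set α)
    (hfin : ∀ k, (A k).Finite)
    (hdisj : ∀ k l, k ≠ l → Disjoint (A k) (A l)) :
    (⋃ k ∈ t, A k).ncard = ∑ k ∈ t, (A k).ncard := by
  classical
  induction t using Finset.induction_on with
  | empty => simp
  | insert a t' ha ih =>
    rw [Finset.sum_insert ha, ← ih, Finset.set_biUnion_insert]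
    refine Set.ncard_union_eq ?_ (hfin a)
      (Set.Finite.biUnion t'.finite_toSet fun k _ => hfin k)
    rw [Set.disjoint_left]
    rintro x hxa hx
    simp only [Set.mem_iUnion] at hx
    obtain ⟨k, hk, hxk⟩ := hx
    exact Set.disjoint_left.mp (hdisj a k (by rintro rfl; exact ha hk)) hxa hxk

/-- Let `n ≥ 2`.  For every real `λ ≥ 0`,
`|λ(△_{n+1} - τ_{n+1}) ∩ ℤ^{n+1}| = ∑_{k=0}^{⌊nλ⌋} |(k/n)(△ₙ - τₙ) ∩ ℤⁿ|`. -/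
theorem ssSimplex_lattice_count_recurrence (n : ℕ) (hn : 2 ≤ n) (lam : ℝ)
    (hlam : 0 ≤ lam) :
    lattCount (lam • ((· - tauPt (n + 1)) '' ssSimplex (n + 1))) =
      ∑ k ∈ Finset.range ((⌊(n : ℝ) * lam⌋).toNat + 1),
        lattCount (((k : ℝ) / n) • ((· - tauPt n) '' ssSimplex n)) := by
  have hn1 : 1 ≤ n := by omega
  have hn0 : (0:ℝ) < (n:ℝ) := by exact_mod_cast hn1
  unfold lattCount
  rw [mem_scaled' (n+1) (by omega) lam hlam, decomp n hn1 lam hlam,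
    ncard_biUnion_eq _ _ (Ak_finite n lam) (fun k l h => Ak_disjoint n lam h)]
  refine Finset.sum_congr rfl fun k hk => ?_
  have hkle : (k:ℝ) ≤ (n:ℝ) * lam := by
    rw [Finset.mem_range] at hk
    have h3 : 0 ≤ ⌊(n:ℝ)*lam⌋ := Int.floor_nonneg.mpr (by positivity)
    have h2 : (k:ℤ) ≤ ⌊(n:ℝ)*lam⌋ := by omega
    calc (k:ℝ) = ((k:ℤ):ℝ) := by push_cast; ring
      _ ≤ (⌊(n:ℝ)*lam⌋ : ℝ) := by exact_mod_cast h2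
      _ ≤ (n:ℝ)*lam := Int.floor_le _
  rw [mem_scaled' n hn1 ((k:ℝ)/(n:ℝ)) (by positivity),
    ← phi_image n hn1 lam hlam k hkle,
    Set.ncard_image_of_injOn (phi_injOn n lam k)]
end
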